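/- arXiv:1004.4743 — 3 statements merged into one kernel-verified Lean document; each statement's English description precedes it below -/
import Mathlib

section
/- A onesided subshift Σ is finite if and only if its limit set Ω_Σ = ⋂_j σ^j(Σ) is finite. -/
/-- The onesided shift map. -/
def shiftN {A : Type*} (x : ℕ → A) : ℕ → A := fun i => x (i + 1)

/-!
Every `σʲ(Σ)` is compact, shift-invariant and infinite when `Σ` is, so by the Morse–Hedlund
argument it has at least `n + 1` words of length `n`. The sets of length-`n` words of the `σʲ(Σ)`
decrease and hence stabilise, and by compactness the stable set is exactly the set of length-`n`
words of `Ω_Σ`. Thus `Ω_Σ` has more than `n` words of length `n` for every `n`, so it is infinite.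
-/

open Set Function

theorem Set.MapsTo.antitone_iterate_image {α : Type*} {f : α → α} {s : Set α}
    (h : MapsTo f s s) : Antitone fun j => f^[j] '' s := by
  refine antitone_nat_of_succ_le fun j => ?_
  rw [iterate_succ, image_comp]
  exact image_mono h.image_subset

theorem Set.MapsTo.iterate_image {α : Type*} {f : α → α} {s : Set α}
    (h : MapsTo f s s) (j : ℕ) : MapsTo f (f^[j] '' s) (f^[j] '' s) := by
  rintro _ ⟨x, hx, rfl⟩
  exact ⟨f x, h hx, (iterate_succ_apply f j x).symm.trans (iterate_succ_apply' f j x)⟩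

theorem Set.exists_iInter_eq_of_antitone {α : Type*} [Finite α] {W : ℕ → Set α}
    (hW : Antitone W) : ∃ J, ⋂ j, W j = W J := by
  obtain ⟨J, hJ⟩ := WellFoundedLT.antitone_chain_condition hW
  refine ⟨J, (iInter_subset W J).antisymm (subset_iInter fun j => ?_)⟩
  rcases le_total j J with hj | hj
  · exact hW hj
  · exact (hJ j hj).subset

theorem IsCompact.image_iInter_of_antitone {X Y : Type*} [TopologicalSpace X]
    [TopologicalSpace Y] [T1Space Y] {f : X → Y} (hf : Continuous f) {K : ℕ → Set X}
    (hK : Antitone K) (hcompact : ∀ j, IsCompact (K j)) (hclosed : ∀ j, IsClosed (K j)) :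
    f '' ⋂ j, K j = ⋂ j, f '' K j := by
  refine (image_iInter_subset K f).antisymm fun y hy => ?_
  have hfibre : IsClosed (f ⁻¹' {y}) := isClosed_singleton.preimage hf
  obtain ⟨x, hx⟩ := IsCompact.nonempty_iInter_of_sequence_nonempty_isCompact_isClosed
    (fun j => K j ∩ f ⁻¹' {y}) (fun j => inter_subset_inter_left _ (hK j.le_succ))
    (fun j => by obtain ⟨x, hx, rfl⟩ := mem_iInter.mp hy j; exact ⟨x, hx, rfl⟩)
    ((hcompact 0).inter_right hfibre) (fun j => (hclosed j).inter hfibre)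
  exact ⟨x, mem_iInter.mpr fun j => (mem_iInter.mp hx j).1, (mem_iInter.mp hx 0).2⟩

section Subshift

variable {A : Type*}

theorem shiftN_iterate_apply (x : ℕ → A) (j i : ℕ) : shiftN^[j] x i = x (i + j) := by
  induction j generalizing x with
  | zero => rfl
  | succ j ih => rw [iterate_succ_apply, ih, shiftN]; exact congrArg x (by omega)

theorem continuous_shiftN [TopologicalSpace A] : Continuous (shiftN : (ℕ → A) → ℕ → A) :=
  continuous_pi fun i => continuous_apply (i + 1)

def initialWord (n : ℕ) (x : ℕ → A) : Fin n → A := fun i => x i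

theorem continuous_initialWord [TopologicalSpace A] (n : ℕ) :
    Continuous (initialWord n : (ℕ → A) → Fin n → A) :=
  continuous_pi fun i => continuous_apply (i : ℕ)

theorem Set.Infinite.image_shiftN_iterate [Finite A] {S : Set (ℕ → A)} (hS : S.Infinite)
    (j : ℕ) : (shiftN^[j] '' S).Infinite := by
  intro hfin
  have hinj : Injective fun x : ℕ → A => (initialWord j x, shiftN^[j] x) := by
    intro x y hxy
    funext i
    rcases lt_or_ge i j with hi | hi
    · exact congrFun (Prod.ext_iff.mp hxy).1 ⟨i, hi⟩
    · simpa [shiftN_iterate_apply, Nat.sub_add_cancel hi] using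
        congrFun (Prod.ext_iff.mp hxy).2 (i - j)
  exact hS (((finite_univ.prod hfin).preimage hinj.injOn).subset
    fun x hx => ⟨mem_univ _, x, hx, rfl⟩)

variable {T : Set (ℕ → A)}

theorem injOn_initialWord_of_determines_next (hT : MapsTo shiftN T T) {n : ℕ}
    (hnext : ∀ x ∈ T, ∀ y ∈ T, initialWord n x = initialWord n y → x n = y n) :
    InjOn (initialWord n) T := by
  intro x hx y hy hxy
  funext k
  induction k using Nat.strong_induction_on with
  | _ k ih =>
    rcases lt_or_ge k n with hk | hk
    · exact congrFun hxy ⟨k, hk⟩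
    · obtain ⟨d, rfl⟩ := Nat.exists_eq_add_of_le hk
      have hword : initialWord n (shiftN^[d] x) = initialWord n (shiftN^[d] y) :=
        funext fun i => by
          simp only [initialWord, shiftN_iterate_apply]
          exact ih _ (by omega)
      simpa [shiftN_iterate_apply] using
        hnext _ (hT.iterate d hx) _ (hT.iterate d hy) hword

variable [Finite A]

theorem ncard_image_initialWord_lt_succ (hT : MapsTo shiftN T T) (hinf : T.Infinite) (n : ℕ) :
    (initialWord n '' T).ncard < (initialWord (n + 1) '' T).ncard := by
  have htrunc : Fin.init '' (initialWord (n + 1) '' T) = initialWord n '' T := by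
    rw [image_image]; rfl
  refine (htrunc ▸ ncard_image_le (toFinite _)).lt_of_ne fun heq => hinf ?_
  -- equal counts make truncation injective, so the word of length `n` determines the next letter
  have hinit : InjOn Fin.init (initialWord (n + 1) '' T) :=
    injOn_of_ncard_image_eq (htrunc ▸ heq) (toFinite _)
  refine Finite.of_finite_image (toFinite _) (injOn_initialWord_of_determines_next (n := n) hT ?_)
  intro x hx y hy hxy
  exact congrFun (hinit (mem_image_of_mem _ hx) (mem_image_of_mem _ hy) hxy) (Fin.last n)

theorem lt_ncard_image_initialWord (hT : MapsTo shiftN T T) (hinf : T.Infinite) (n : ℕ) :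
    n < (initialWord n '' T).ncard := by
  induction n with
  | zero => exact (ncard_pos (toFinite _)).mpr (hinf.nonempty.image _)
  | succ n ih => exact (Nat.succ_lt_succ ih).trans_le (ncard_image_initialWord_lt_succ hT hinf n)

theorem lt_ncard_image_initialWord_iInter [TopologicalSpace A] [DiscreteTopology A]
    {S : Set (ℕ → A)} (hclosed : IsClosed S) (hinv : MapsTo shiftN S S) (hinf : S.Infinite)
    (n : ℕ) : n < (initialWord n '' ⋂ j, shiftN^[j] '' S).ncard := by
  have hcompact : ∀ j, IsCompact (shiftN^[j] '' S) := fun j =>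
    hclosed.isCompact.image (continuous_shiftN.iterate j)
  rw [IsCompact.image_iInter_of_antitone (continuous_initialWord n) hinv.antitone_iterate_image
    hcompact fun j => (hcompact j).isClosed]
  obtain ⟨J, hJ⟩ := exists_iInter_eq_of_antitone (W := fun j => initialWord n '' (shiftN^[j] '' S))
    fun i j hij => image_mono (hinv.antitone_iterate_image hij)
  rw [hJ]
  exact lt_ncard_image_initialWord (hinv.iterate_image J) (hinf.image_shiftN_iterate J) n

end Subshift

/-- A onesided subshift is finite iff its limit set is finite. -/
theorem stmt11 {A : Type*} [Fintype A] [TopologicalSpace A] [DiscreteTopology A]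
    (S : Set (ℕ → A)) (hclosed : IsClosed S) (hinv : ∀ x ∈ S, shiftN x ∈ S) :
    S.Finite ↔ (⋂ j : ℕ, shiftN^[j] '' S).Finite := by
  refine ⟨fun hS => hS.subset (iInter_subset_of_subset 0 (by simp)), fun hΩ => ?_⟩
  by_contra hS
  exact (ncard_image_le hΩ).not_gt (lt_ncard_image_initialWord_iInter hclosed hinv hS _)
end

section
/- The limit set of a cellular automaton is either a singleton or infinite. -/
/-!
The limit set `Ω` of `F` is compact, shift-invariant and meets the closed, `F`-invariant set of
uniform configurations, so it contains some uniform `ā`. Suppose it also contains `x ≠ ā`.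
Since `F^j` has a finite radius `r`, splicing a preimage of `ā` (on the left) with a preimage
of a suitable shift of `x` (on the right) yields a point of `F^j(A^ℤ)` that equals `a` on all
cells left of `-r` but not everywhere; shifted to its first defect, it lies in the closed set
`D` of configurations equal to `a` on negative cells and different from `a` at `0`. By
compactness `Ω` meets `D`, and the shifts of a point of `D` to the right are pairwise distinct.
-/

open Function Set Filter Topology

namespace Function

variable {X : Type*}

def limitSet (F : X → X) : Set X := ⋂ j : ℕ, range F^[j]

lemma range_iterate_succ_subset (F : X → X) (j : ℕ) : range F^[j + 1] ⊆ range F^[j] := by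
  rintro _ ⟨x, rfl⟩
  exact ⟨F x, (iterate_succ_apply F j x).symm⟩

lemma Commute.mapsTo_limitSet {F G : X → X} (h : Function.Commute F G) :
    MapsTo G (limitSet F) (limitSet F) := fun x hx => mem_iInter.2 fun j => by
  obtain ⟨u, rfl⟩ := mem_iInter.1 hx j
  exact ⟨G u, (h.iterate_left j).eq u⟩

variable [TopologicalSpace X] [CompactSpace X] [T2Space X]

lemma limitSet_inter_nonempty {F : X → X} (hF : Continuous F) {S : Set X} (hS : IsClosed S)
    (h : ∀ j, (range F^[j] ∩ S).Nonempty) : (limitSet F ∩ S).Nonempty := by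
  have hclosed (j : ℕ) : IsClosed (range F^[j] ∩ S) :=
    (isCompact_range (hF.iterate j)).isClosed.inter hS
  rw [limitSet, iInter_inter]
  exact IsCompact.nonempty_iInter_of_sequence_nonempty_isCompact_isClosed _
    (fun j => inter_subset_inter_left S (range_iterate_succ_subset F j)) h
    (hclosed 0).isCompact hclosed

end Function

namespace CellularAutomaton

section Configurations

variable {A : Type*}

def shift (n : ℤ) (x : ℤ → A) : ℤ → A := fun i => x (i + n)

@[simp]
lemma shift_apply (n i : ℤ) (x : ℤ → A) : shift n x i = x (i + n) := rfl

lemma shift_zero : (shift 0 : (ℤ → A) → ℤ → A) = id := by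
  funext x i
  simp

lemma shift_add (m n : ℤ) :
    (shift (m + n) : (ℤ → A) → ℤ → A) = shift m ∘ shift n := by
  funext x i
  simp [add_assoc]

lemma commute_shift {F : (ℤ → A) → ℤ → A} (h : Function.Commute F (shift 1)) (n : ℤ) :
    Function.Commute F (shift n) := by
  have h_neg : Function.Commute F (shift (-1)) :=
    h.inverses_right (fun x => by funext i; simp) (fun x => by funext i; simp)
  induction n using Int.induction_on with
  | zero => rw [shift_zero]; exact Function.Commute.id_right
  | succ n ih => rw [add_comm, shift_add]; exact h.comp_right ih
  | pred n ih => rw [sub_eq_neg_add, shift_add]; exact h_neg.comp_right ih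

lemma eq_const_of_isFixedPt_shift_one {x : ℤ → A} (h : IsFixedPt (shift 1) x) :
    x = const ℤ (x 0) := by
  have step (i : ℤ) : x (i + 1) = x i := congrFun h i
  funext i
  show x i = x 0
  induction i using Int.induction_on with
  | zero => rfl
  | succ i ih => rw [step, ih]
  | pred i ih => rw [← ih, ← step, sub_add_cancel]

lemma continuous_shift [TopologicalSpace A] (n : ℤ) :
    Continuous (shift n : (ℤ → A) → ℤ → A) :=
  continuous_pi fun i => continuous_apply (i + n)

def cylinder (x : ℤ → A) (r : ℕ) : Set (ℤ → A) :=
  {y | ∀ i, i.natAbs ≤ r → y i = x i}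

lemma cylinder_mono (x : ℤ → A) {r s : ℕ} (hrs : r ≤ s) : cylinder x s ⊆ cylinder x r :=
  fun _ hy i hi => hy i (hi.trans hrs)

lemma cylinder_eq_of_mem {x y : ℤ → A} {r : ℕ} (hy : y ∈ cylinder x r) :
    cylinder y r = cylinder x r := by
  ext z
  exact forall₂_congr fun i hi => by rw [hy i hi]

def HasRadius (G : (ℤ → A) → ℤ → A) (r : ℕ) : Prop :=
  ∀ n x y, (∀ i, (i - n).natAbs ≤ r → x i = y i) → G x n = G y n

lemma HasRadius.apply_splice_left {G : (ℤ → A) → ℤ → A} {r : ℕ} (hG : HasRadius G r)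
    (u v : ℤ → A) {n : ℤ} (hn : n + r < 0) :
    G (fun i => if i < 0 then u i else v i) n = G u n :=
  hG n _ _ fun i hi => if_pos (by omega)

lemma HasRadius.apply_splice_right {G : (ℤ → A) → ℤ → A} {r : ℕ} (hG : HasRadius G r)
    (u v : ℤ → A) {n : ℤ} (hn : r ≤ n) :
    G (fun i => if i < 0 then u i else v i) n = G v n :=
  hG n _ _ fun i hi => if_neg (by omega)

def firstDefectAtZero (a : A) : Set (ℤ → A) := {w | (∀ i < 0, w i = a) ∧ w 0 ≠ a}

lemma exists_shift_mem_firstDefectAtZero {ζ : ℤ → A} {a : A} {N m : ℤ}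
    (hN : ∀ i < N, ζ i = a) (hm : ζ m ≠ a) : ∃ t, shift t ζ ∈ firstDefectAtZero a := by
  obtain ⟨t, ht, hleast⟩ := Int.exists_least_of_bdd (P := fun i => ζ i ≠ a)
    ⟨N, fun i hi => not_lt.1 fun h => hi (hN i h)⟩ ⟨m, hm⟩
  refine ⟨t, fun i hi => not_not.1 fun h => ?_, by simpa using ht⟩
  have := hleast _ h
  omega

lemma infinite_of_mem_firstDefectAtZero {s : Set (ℤ → A)} (hs : ∀ n, MapsTo (shift n) s s)
    {a : A} {w : ℤ → A} (hw : w ∈ s) (hwa : w ∈ firstDefectAtZero a) : s.Infinite := by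
  have not_lt_of_eq (p q : ℕ) (h : shift (-p) w = shift (-q) w) : ¬ p < q := fun hpq => by
    have hp := congrFun h p
    simp only [shift_apply, add_neg_cancel] at hp
    exact hwa.2 (hp.trans (hwa.1 _ (by omega)))
  refine infinite_of_injective_forall_mem (f := fun n : ℕ => shift (-n) w)
    (fun m n hmn => ?_) fun n => hs _ hw
  exact le_antisymm (not_lt.1 (not_lt_of_eq n m hmn.symm)) (not_lt.1 (not_lt_of_eq m n hmn))

end Configurations

section Topology

variable {A : Type*} [TopologicalSpace A] [DiscreteTopology A]

lemma nhds_hasBasis_cylinder (x : ℤ → A) : (𝓝 x).HasBasis (fun _ => True) (cylinder x) := by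
  refine ⟨fun s => ⟨fun hs => ?_, fun ⟨r, _, hr⟩ => mem_of_superset ?_ hr⟩⟩
  · rw [nhds_pi, Filter.mem_pi'] at hs
    obtain ⟨I, t, ht, hIt⟩ := hs
    refine ⟨I.sup Int.natAbs, trivial, fun y hy => hIt fun i hi => ?_⟩
    rw [hy i (Finset.le_sup hi)]
    exact mem_of_mem_nhds (ht i)
  · have hfin : {i : ℤ | i.natAbs ≤ r}.Finite :=
      (Set.finite_Icc (-(r : ℤ)) r).subset fun i hi => by
        simp only [mem_ofPred_eq] at hi
        simp only [mem_Icc]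
        omega
    refine (eventually_all_finite hfin).2 fun i _ => ?_
    have := (continuous_apply i).tendsto x
    rwa [nhds_discrete A, tendsto_pure] at this

lemma isClosed_firstDefectAtZero (a : A) : IsClosed (firstDefectAtZero a) := by
  simp only [firstDefectAtZero, ofPred_and, ofPred_forall]
  refine (isClosed_iInter fun i => isClosed_iInter fun _ => ?_).inter ?_
  · exact (isClosed_discrete {a}).preimage (continuous_apply (A := fun _ : ℤ => A) i)
  · exact (isClosed_discrete {a}ᶜ).preimage (continuous_apply (A := fun _ : ℤ => A) 0)

variable [Finite A]

lemma exists_forall_cylinder_eq {B : Type*} [TopologicalSpace B] [DiscreteTopology B]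
    {g : (ℤ → A) → B} (hg : Continuous g) :
    ∃ r, ∀ x, ∀ y ∈ cylinder x r, g y = g x := by
  let V : ℕ → Set (ℤ → A) := fun r => {x | ∀ y ∈ cylinder x r, g y = g x}
  have hV_open (r : ℕ) : IsOpen (V r) := isOpen_iff_mem_nhds.2 fun x hx =>
    mem_of_superset ((nhds_hasBasis_cylinder x).mem_of_mem trivial) fun x' hx' y hy =>
      (hx y (cylinder_eq_of_mem hx' ▸ hy)).trans (hx x' hx').symm
  have hV_mono : Monotone V := fun r s hrs x hx y hy => hx y (cylinder_mono x hrs hy)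
  have hV_cover : univ ⊆ ⋃ r, V r := fun x _ => by
    have : {y | g y = g x} ∈ 𝓝 x :=
      hg.continuousAt.preimage_mem_nhds ((isOpen_discrete {g x}).mem_nhds rfl)
    obtain ⟨r, -, hr⟩ := (nhds_hasBasis_cylinder x).mem_iff.1 this
    exact mem_iUnion.2 ⟨r, hr⟩
  obtain ⟨r, hr⟩ := isCompact_univ.elim_directed_cover V hV_open hV_cover hV_mono.directed_le
  exact ⟨r, fun x => hr (mem_univ x)⟩

/-- The easy half of the Curtis–Hedlund–Lyndon theorem. -/
lemma exists_hasRadius {G : (ℤ → A) → ℤ → A} (hG : Continuous G)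
    (hshift : ∀ n, Function.Commute G (shift n)) : ∃ r, HasRadius G r := by
  obtain ⟨r, hr⟩ := exists_forall_cylinder_eq ((continuous_apply 0).comp hG)
  refine ⟨r, fun n x y hxy => ?_⟩
  have : G (shift n x) 0 = G (shift n y) 0 :=
    hr (shift n y) (shift n x) fun i hi => hxy (i + n) (by simpa using hi)
  rw [hshift n, hshift n] at this
  simpa using this

end Topology

section LimitSet

variable {A : Type*} [TopologicalSpace A] [DiscreteTopology A] [Finite A]
  {F : (ℤ → A) → ℤ → A}

lemma exists_const_mem_limitSet [Nonempty A] (hF : Continuous F)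
    (hshift : Function.Commute F (shift 1)) :
    ∃ a : A, const ℤ a ∈ limitSet F := by
  obtain ⟨z, hz, hfix⟩ := limitSet_inter_nonempty hF (isClosed_fixedPoints (continuous_shift 1))
    fun j => ⟨_, mem_range_self _,
      (show IsFixedPt (shift 1) (const ℤ (Classical.arbitrary A)) from rfl).map
        (hshift.iterate_left j)⟩
  exact ⟨z 0, eq_const_of_isFixedPt_shift_one hfix ▸ hz⟩

lemma range_iterate_inter_firstDefectAtZero_nonempty (hF : Continuous F)
    (hshift : ∀ n, Function.Commute F (shift n)) {a : A} (ha : const ℤ a ∈ limitSet F)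
    {x : ℤ → A} (hx : x ∈ limitSet F) (hxa : x ≠ const ℤ a) (j : ℕ) :
    (range F^[j] ∩ firstDefectAtZero a).Nonempty := by
  obtain ⟨k, hk⟩ : ∃ k, x k ≠ a := not_forall.1 fun h => hxa (funext h)
  have hshift_j (n : ℤ) : Function.Commute F^[j] (shift n) := (hshift n).iterate_left j
  obtain ⟨r, hr⟩ := exists_hasRadius (hF.iterate j) hshift_j
  obtain ⟨u, hu⟩ := mem_iInter.1 ha j
  obtain ⟨y, rfl⟩ := mem_iInter.1 hx j
  -- the right half is shifted so that the cell `k` of `x` lands at `r`, out of reach of `u`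
  let s : ℤ → A := fun i => if i < 0 then u i else shift (k - r) y i
  have h_left (n : ℤ) (hn : n < -r) : F^[j] s n = a := by
    rw [hr.apply_splice_left _ _ (by omega), hu, const_apply]
  have h_right : F^[j] s r ≠ a := by
    rw [hr.apply_splice_right _ _ le_rfl, hshift_j, shift_apply, add_sub_cancel]
    exact hk
  obtain ⟨t, ht⟩ := exists_shift_mem_firstDefectAtZero h_left h_right
  exact ⟨_, ⟨shift t s, hshift_j t s⟩, ht⟩

end LimitSet

end CellularAutomaton

open CellularAutomaton in
/-- The limit set of a cellular automaton is either a singleton or infinite. -/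
theorem stmt13 {A : Type*} [Fintype A] [Nonempty A] [TopologicalSpace A] [DiscreteTopology A]
    (F : (ℤ → A) → (ℤ → A)) (hF : Continuous F)
    (hcomm : ∀ x : ℤ → A, F (fun i => x (i + 1)) = fun i => F x (i + 1)) :
    (∃ z : ℤ → A, (⋂ j : ℕ, F^[j] '' Set.univ) = {z})
      ∨ (⋂ j : ℕ, F^[j] '' Set.univ).Infinite := by
  have hshift : ∀ n, Function.Commute F (shift n) := commute_shift hcomm
  have hΩ : (⋂ j : ℕ, F^[j] '' Set.univ) = limitSet F := by simp only [image_univ]; rfl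
  rw [hΩ]
  obtain ⟨a, ha⟩ := exists_const_mem_limitSet hF (hshift 1)
  by_cases hsingle : ∀ x ∈ limitSet F, x = const ℤ a
  · exact Or.inl ⟨_, eq_singleton_iff_unique_mem.2 ⟨ha, hsingle⟩⟩
  push Not at hsingle
  obtain ⟨x, hx, hxa⟩ := hsingle
  obtain ⟨w, hwΩ, hw⟩ := limitSet_inter_nonempty hF (isClosed_firstDefectAtZero a)
    (range_iterate_inter_firstDefectAtZero_nonempty hF hshift ha hx hxa)
  exact Or.inr (infinite_of_mem_firstDefectAtZero (fun n => (hshift n).mapsTo_limitSet) hwΩ hw)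
end

section
/- A onesided subshift Σ ⊆ A^ℕ is asymptotically p-periodic (the shift restricted to its asymptotic set ω_Σ satisfies σ^p = id) if and only if every configuration x ∈ Σ is eventually p-periodic, i.e., there exists J with σ^{J+p}(x) = σ^J(x). -/
open Filter Topology

lemma shiftN_iterate {A : Type*} (x : ℕ → A) (t : ℕ) :
    shiftN^[t] x = fun i => x (i + t) := by
  induction t generalizing x with
  | zero => simp
  | succ n ih =>
    rw [Function.iterate_succ_apply, ih]
    funext i
    simp [shiftN, Nat.add_assoc]

lemma shiftN_continuous {A : Type*} [TopologicalSpace A] :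
    Continuous (shiftN (A := A)) :=
  continuous_pi fun i => continuous_apply (i + 1)

lemma mem_of_mapClusterPt {X : Type*} [TopologicalSpace X] {z : X} {u : ℕ → X}
    {C : Set X} (hC : IsClosed C) (h : MapClusterPt z Filter.atTop u)
    (hu : ∀ᶠ n in Filter.atTop, u n ∈ C) : z ∈ C := by
  have h0 : ClusterPt z (Filter.map u Filter.atTop) := h
  have h1 : ClusterPt z (Filter.principal C) :=
    h0.mono (Filter.le_principal_iff.2 (Filter.mem_map.2 hu))
  rw [← hC.closure_eq]
  exact mem_closure_iff_clusterPt.mpr h1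

/-- A onesided subshift is asymptotically `p`-periodic iff every configuration is
eventually `p`-periodic. -/
theorem stmt19 {A : Type*} [Fintype A] [TopologicalSpace A] [DiscreteTopology A]
    (S : Set (ℕ → A)) (hclosed : IsClosed S) (hinv : ∀ x ∈ S, shiftN x ∈ S)
    (p : ℕ) (hp : 1 ≤ p) :
    (∀ z : ℕ → A, (∃ x ∈ S, MapClusterPt z Filter.atTop (fun t => shiftN^[t] x)) →
        shiftN^[p] z = z)
      ↔ ∀ x ∈ S, ∃ J : ℕ, shiftN^[J + p] x = shiftN^[J] x := by
  constructor
  · intro h x hx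
    by_contra hcon
    push_neg at hcon
    -- frequently, x (n+p) ≠ x n
    have hfreq : ∃ᶠ n in atTop, x (n + p) ≠ x n := by
      rw [frequently_atTop]
      intro J
      have := hcon J
      rw [shiftN_iterate, shiftN_iterate] at this
      have : ∃ i, x (i + (J + p)) ≠ x (i + J) := by
        by_contra hc
        push_neg at hc
        exact this (funext hc)
      obtain ⟨i, hi⟩ := this
      exact ⟨i + J, Nat.le_add_left _ _, by
        have e : i + J + p = i + (J + p) := by omega
        rw [e]; exact hi⟩
    obtain ⟨φ, hφmono, hφ⟩ := extraction_of_frequently_atTop hfreq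
    set u : ℕ → (ℕ → A) := fun k => shiftN^[φ k] x with hu
    obtain ⟨z, hz⟩ := exists_clusterPt_of_compactSpace (map u atTop)
    have hzc : MapClusterPt z atTop (fun t => shiftN^[t] x) := by
      have hle : map u atTop ≤ map (fun t => shiftN^[t] x) atTop := by
        have : u = (fun t => shiftN^[t] x) ∘ φ := rfl
        rw [this, ← Filter.map_map]
        exact map_mono (hφmono.tendsto_atTop)
      exact hz.mono hle
    have hzp := h z ⟨x, hx, hzc⟩
    have hC : IsClosed {y : ℕ → A | y 0 ≠ y p} := by
      have hop : IsOpen {y : ℕ → A | y 0 = y p} := by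
        have hcont : Continuous (fun y : ℕ → A => (y 0, y p)) :=
          (continuous_apply 0).prodMk (continuous_apply p)
        exact (isOpen_discrete {q : A × A | q.1 = q.2}).preimage hcont
      simpa [Set.compl_setOf] using hop.isClosed_compl
    have hzC : z ∈ {y : ℕ → A | y 0 ≠ y p} := by
      apply mem_of_mapClusterPt hC hz
      filter_upwards with k
      simp only [hu, Set.mem_setOf_eq, shiftN_iterate]
      have e1 : (0 : ℕ) + φ k = φ k := by omega
      have e2 : p + φ k = φ k + p := by omega
      rw [e1, e2]
      exact fun he => hφ k he.symm
    apply hzC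
    have := congrFun hzp 0
    rw [shiftN_iterate] at this
    simpa using this.symm
  · rintro h z ⟨x, hx, hz⟩
    obtain ⟨J, hJ⟩ := h x hx
    have hP : IsClosed {y : ℕ → A | shiftN^[p] y = y} :=
      isClosed_eq (shiftN_continuous.iterate p) continuous_id
    have hz2 : z ∈ {y : ℕ → A | shiftN^[p] y = y} := by
      apply mem_of_mapClusterPt hP hz
      rw [eventually_atTop]
      refine ⟨J, fun t ht => ?_⟩
      obtain ⟨s, rfl⟩ := Nat.exists_eq_add_of_le ht
      simp only [Set.mem_setOf_eq, shiftN_iterate, ← Function.iterate_add_apply]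
      funext i
      have e := congrFun hJ (i + s)
      rw [shiftN_iterate, shiftN_iterate] at e
      have e1 : i + p + (J + s) = i + s + (J + p) := by omega
      have e2 : i + (J + s) = i + s + J := by omega
      rw [e1, e2]
      exact e
    exact hz2
end
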